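/- Let φ : ℝ → ℝ be essentially bounded and measurable and α ∈ ℝ. The following are equivalent: (i) for every g ∈ L¹(ℝ), ∫_ℝ φ(x+s) g(x) dx → α ∫_ℝ g(x) dx as s → ∞ (the translates of φ converge to the constant α in the weak* sense); (ii) φ is almost convergent to α, and for every s ∈ ℝ and every g ∈ L¹(ℝ), ∫_ℝ (φ(x+s+t) − φ(x+t)) g(t) dt → 0 as x → ∞. -/

import Mathlib

/-!
Only the a.e. class of `φ` matters, so `φ` may be assumed bounded and measurable. The forward
direction is immediate: testing against the indicator of `(0, θ]` gives the moving averages of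
`φ`, and the differences of translates are differences of two families with the same limit.

For the converse put `F s = ∫ φ (t + s) * g t`. The Tauberian condition says
`F (x + s) - F x → 0` for every `s`, so by dominated convergence `F` is asymptotic to its own
moving average `(1/θ) ∫_s^{s+θ} F`. By Fubini this average is `∫ A (t + s) * g t`, where `A` is the
moving average of `φ` over windows of length `θ`. Almost convergence yields a `θ` for which `A` is
eventually uniformly close to `α`, and since `g` has small tails, `∫ A (t + s) * g t` is then
close to `α * ∫ g` for large `s`.
-/

open MeasureTheory Filter

def AlmostConvergentTo (φ : ℝ → ℝ) (α : ℝ) : Prop :=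
  Tendsto (fun θ : ℝ =>
      limsup (fun x : ℝ => (1 / θ) * ∫ t in x..(x + θ), φ t) atTop) atTop (nhds α) ∧
  Tendsto (fun θ : ℝ =>
      liminf (fun x : ℝ => (1 / θ) * ∫ t in x..(x + θ), φ t) atTop) atTop (nhds α)

open Topology Set

noncomputable def movingAverage (φ : ℝ → ℝ) (θ x : ℝ) : ℝ := (1 / θ) * ∫ t in x..(x + θ), φ t

def TranslatesWeakStarTendsto (φ : ℝ → ℝ) (α : ℝ) : Prop :=
  ∀ g : ℝ → ℝ, Integrable g →
    Tendsto (fun s : ℝ => ∫ x : ℝ, φ (x + s) * g x) atTop (𝓝 (α * ∫ x : ℝ, g x))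

def WeakStarSlowlyOscillating (φ : ℝ → ℝ) : Prop :=
  ∀ s : ℝ, ∀ g : ℝ → ℝ, Integrable g →
    Tendsto (fun x : ℝ => ∫ t : ℝ, (φ (x + s + t) - φ (x + t)) * g t) atTop (𝓝 0)

theorem almostConvergentTo_iff {φ : ℝ → ℝ} {α : ℝ} :
    AlmostConvergentTo φ α ↔
      Tendsto (fun θ => limsup (movingAverage φ θ) atTop) atTop (𝓝 α) ∧
      Tendsto (fun θ => liminf (movingAverage φ θ) atTop) atTop (𝓝 α) :=
  Iff.rfl

theorem MeasureTheory.MemLp.exists_measurable_norm_le_ae_eq {X : Type*} [MeasurableSpace X]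
    {μ : Measure X} {φ : X → ℝ} (hφ : MemLp φ ⊤ μ) :
    ∃ ψ : X → ℝ, ∃ C : ℝ, Measurable ψ ∧ (∀ x, ‖ψ x‖ ≤ C) ∧ φ =ᵐ[μ] ψ := by
  set C := (eLpNormEssSup φ μ).toReal
  have hbound : ∀ᵐ x ∂μ, ‖φ x‖ ≤ C := by
    have hfin : eLpNormEssSup φ μ ≠ ⊤ := by simpa [eLpNorm_exponent_top] using hφ.2.ne
    filter_upwards [ae_le_eLpNormEssSup (f := φ) (μ := μ)] with x hx
    simpa using ENNReal.toReal_mono hfin hx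
  refine ⟨fun x => max (min (hφ.1.mk φ x) C) (-C), C,
    (hφ.1.stronglyMeasurable_mk.measurable.min measurable_const).max measurable_const,
    fun x => ?_, ?_⟩
  · have hC : 0 ≤ C := ENNReal.toReal_nonneg
    rw [Real.norm_eq_abs, abs_le]
    exact ⟨le_max_right _ _, max_le (min_le_right _ _) (by linarith)⟩
  · filter_upwards [hφ.1.ae_eq_mk, hbound] with x hx hxC
    rw [Real.norm_eq_abs, abs_le] at hxC
    rw [← hx, min_eq_left hxC.2, max_eq_left hxC.1]

section

variable {φ ψ g : ℝ → ℝ} {C α : ℝ}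

theorem movingAverage_congr_ae (h : φ =ᵐ[volume] ψ) : movingAverage φ = movingAverage ψ := by
  ext θ x
  rw [movingAverage, movingAverage, intervalIntegral.integral_congr_ae (h.mono fun t ht _ => ht)]

theorem almostConvergentTo_congr_ae (h : φ =ᵐ[volume] ψ) :
    AlmostConvergentTo φ α ↔ AlmostConvergentTo ψ α := by
  rw [almostConvergentTo_iff, almostConvergentTo_iff, movingAverage_congr_ae h]

theorem translatesWeakStarTendsto_congr_ae (h : φ =ᵐ[volume] ψ) :
    TranslatesWeakStarTendsto φ α ↔ TranslatesWeakStarTendsto ψ α := by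
  have (g : ℝ → ℝ) (s : ℝ) : ∫ x, φ (x + s) * g x = ∫ x, ψ (x + s) * g x :=
    integral_congr_ae <|
      ((measurePreserving_add_right volume s).quasiMeasurePreserving.ae_eq h).mul
        (EventuallyEq.refl _ g)
  simp only [TranslatesWeakStarTendsto, this]

theorem weakStarSlowlyOscillating_congr_ae (h : φ =ᵐ[volume] ψ) :
    WeakStarSlowlyOscillating φ ↔ WeakStarSlowlyOscillating ψ := by
  have hc (c : ℝ) : (fun t => φ (c + t)) =ᵐ[volume] fun t => ψ (c + t) :=
    (measurePreserving_add_left volume c).quasiMeasurePreserving.ae_eq h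
  have (x s : ℝ) (g : ℝ → ℝ) : ∫ t, (φ (x + s + t) - φ (x + t)) * g t =
      ∫ t, (ψ (x + s + t) - ψ (x + t)) * g t :=
    integral_congr_ae <| ((hc (x + s)).sub (hc x)).mul (EventuallyEq.refl _ g)
  simp only [WeakStarSlowlyOscillating, this]

theorem intervalIntegrable_of_norm_le (hφ : AEStronglyMeasurable φ volume) (hC : ∀ x, ‖φ x‖ ≤ C)
    (a b : ℝ) : IntervalIntegrable φ volume a b :=
  (intervalIntegrable_const (c := C)).mono_fun' hφ.restrict (ae_of_all _ hC)

theorem norm_movingAverage_le (hC : ∀ x, ‖φ x‖ ≤ C) (θ x : ℝ) : ‖movingAverage φ θ x‖ ≤ C := by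
  rcases eq_or_ne θ 0 with rfl | hθ
  · simpa [movingAverage] using (norm_nonneg _).trans (hC 0)
  have hint : ‖∫ t in x..(x + θ), φ t‖ ≤ C * |x + θ - x| :=
    intervalIntegral.norm_integral_le_of_norm_le_const fun t _ => hC t
  rw [movingAverage, norm_mul, add_sub_cancel_left] at *
  calc ‖1 / θ‖ * ‖∫ t in x..(x + θ), φ t‖ ≤ ‖1 / θ‖ * (C * |θ|) := by gcongr
    _ = C := by rw [norm_div, norm_one, Real.norm_eq_abs]; field_simp

theorem continuous_movingAverage (hint : ∀ a b, IntervalIntegrable φ volume a b) (θ : ℝ) :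
    Continuous (movingAverage φ θ) := by
  have hP := intervalIntegral.continuous_primitive hint 0
  have : movingAverage φ θ =
      fun y => (1 / θ) * ((∫ t in (0 : ℝ)..(y + θ), φ t) - ∫ t in (0 : ℝ)..y, φ t) := by
    ext y
    rw [movingAverage, intervalIntegral.integral_interval_sub_left (hint _ _) (hint _ _)]
  rw [this]
  fun_prop

theorem tendsto_movingAverage_sub_self {F : ℝ → ℝ} {M θ : ℝ} (hF : AEStronglyMeasurable F volume)
    (hM : ∀ x, ‖F x‖ ≤ M) (hθ : θ ≠ 0)
    (hosc : ∀ s, Tendsto (fun x => F (x + s) - F x) atTop (𝓝 0)) :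
    Tendsto (fun x => movingAverage F θ x - F x) atTop (𝓝 0) := by
  have hshift (x : ℝ) : AEStronglyMeasurable (fun u => F (x + u)) volume :=
    hF.comp_quasiMeasurePreserving (measurePreserving_add_left volume x).quasiMeasurePreserving
  have hdiff (x : ℝ) :
      movingAverage F θ x - F x = (1 / θ) * ∫ u in (0 : ℝ)..θ, (F (x + u) - F x) := by
    rw [intervalIntegral.integral_sub
      (intervalIntegrable_of_norm_le (hshift x) (fun _ => hM _) _ _) intervalIntegrable_const,
      intervalIntegral.integral_comp_add_left, intervalIntegral.integral_const, movingAverage,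
      add_zero, smul_eq_mul]
    field_simp
    ring
  have hlim : Tendsto (fun x => ∫ u in (0 : ℝ)..θ, (F (x + u) - F x)) atTop
      (𝓝 (∫ _ in (0 : ℝ)..θ, (0 : ℝ))) := by
    refine intervalIntegral.tendsto_integral_filter_of_dominated_convergence (fun _ => 2 * M)
      (Eventually.of_forall fun x => ((hshift x).sub aestronglyMeasurable_const).restrict)
      (Eventually.of_forall fun x => ae_of_all _ fun u _ => ?_) intervalIntegrable_const
      (ae_of_all _ fun u _ => hosc u)
    linarith [norm_sub_le (F (x + u)) (F x), hM (x + u), hM x]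
  simpa [hdiff] using hlim.const_mul (1 / θ)

theorem eventually_norm_integral_comp_add_right_mul_lt {h g : ℝ → ℝ} {M δ η : ℝ}
    (hM : ∀ y, ‖h y‖ ≤ M) (hδ : ∀ᶠ y in atTop, ‖h y‖ ≤ δ) (hg : Integrable g) (hη : 0 < η) :
    ∀ᶠ s in atTop, ‖∫ t, h (t + s) * g t‖ < δ * (∫ t, ‖g t‖) + η := by
  obtain ⟨X, hX⟩ := eventually_atTop.1 hδ
  have hδ0 : 0 ≤ δ := (norm_nonneg _).trans (hX X le_rfl)
  set tail : ℝ → ℝ → ℝ := fun s => (Iio (X - s)).indicator fun t => M * ‖g t‖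
  have htail : Tendsto (fun s => ∫ t, tail s t) atTop (𝓝 0) := by
    have := tendsto_integral_filter_of_dominated_convergence (F := tail) (f := fun _ => 0)
      (fun t => ‖M * ‖g t‖‖)
      (Eventually.of_forall fun s =>
        (hg.norm.const_mul M).aestronglyMeasurable.indicator measurableSet_Iio)
      (Eventually.of_forall fun s => ae_of_all _ fun t => norm_indicator_le_norm_self _ t)
      (hg.norm.const_mul M).norm
      (ae_of_all _ fun t => tendsto_const_nhds.congr' <|
        (eventually_ge_atTop (X - t)).mono fun s hs => ?_)
    · simpa using this
    · exact (indicator_of_notMem (by simp only [mem_Iio, not_lt]; linarith) _).symm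
  filter_upwards [htail.eventually (gt_mem_nhds hη)] with s hs
  have hbound : ∀ t, ‖h (t + s) * g t‖ ≤ δ * ‖g t‖ + tail s t := fun t => by
    rw [norm_mul]
    by_cases ht : t < X - s
    · simp only [tail, indicator_of_mem (mem_Iio.2 ht)]
      nlinarith [hM (t + s), norm_nonneg (g t)]
    · simp only [tail, indicator_of_notMem (fun h => ht (mem_Iio.1 h)), add_zero]
      exact mul_le_mul_of_nonneg_right (hX _ (by linarith)) (norm_nonneg _)
  calc ‖∫ t, h (t + s) * g t‖ ≤ ∫ t, (δ * ‖g t‖ + tail s t) :=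
        norm_integral_le_of_norm_le ((hg.norm.const_mul δ).add
          ((hg.norm.const_mul M).indicator measurableSet_Iio)) (ae_of_all _ hbound)
    _ < δ * (∫ t, ‖g t‖) + η := by
      rw [integral_add (hg.norm.const_mul δ) ((hg.norm.const_mul M).indicator measurableSet_Iio),
        integral_const_mul]
      exact (add_lt_add_iff_left _).2 hs

theorem integrable_comp_add_right_mul (hφ : Measurable φ) (hC : ∀ x, ‖φ x‖ ≤ C)
    (hg : Integrable g) (s : ℝ) : Integrable fun t => φ (t + s) * g t :=
  hg.bdd_mul (hφ.comp (measurable_add_const s)).aestronglyMeasurable (ae_of_all _ fun _ => hC _)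

theorem norm_integral_comp_add_right_mul_le (hC : ∀ x, ‖φ x‖ ≤ C) (hg : Integrable g) (s : ℝ) :
    ‖∫ t, φ (t + s) * g t‖ ≤ C * ∫ t, ‖g t‖ := by
  rw [← integral_const_mul]
  refine norm_integral_le_of_norm_le (hg.norm.const_mul C) (ae_of_all _ fun t => ?_)
  rw [norm_mul]
  exact mul_le_mul_of_nonneg_right (hC _) (norm_nonneg _)

theorem aestronglyMeasurable_integral_comp_add_right_mul (hφ : Measurable φ)
    (hg : AEStronglyMeasurable g volume) :
    AEStronglyMeasurable (fun s => ∫ t, φ (t + s) * g t) volume :=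
  AEStronglyMeasurable.integral_prod_right' (f := fun p : ℝ × ℝ => φ (p.2 + p.1) * g p.2)
    ((hφ.comp (measurable_snd.add measurable_fst)).aestronglyMeasurable.mul hg.comp_snd)

theorem integral_sub_comp_add_mul (hφ : Measurable φ) (hC : ∀ x, ‖φ x‖ ≤ C)
    (hg : Integrable g) (x s : ℝ) :
    ∫ t, (φ (x + s + t) - φ (x + t)) * g t =
      (∫ t, φ (t + (x + s)) * g t) - ∫ t, φ (t + x) * g t := by
  rw [← integral_sub (integrable_comp_add_right_mul hφ hC hg (x + s))
    (integrable_comp_add_right_mul hφ hC hg x)]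
  simp only [add_comm _ (_ : ℝ), sub_mul]

theorem movingAverage_integral_comp_add_right_mul (hφ : Measurable φ) (hC : ∀ x, ‖φ x‖ ≤ C)
    (hg : Integrable g) {θ : ℝ} (hθ : 0 ≤ θ) (s : ℝ) :
    movingAverage (fun u => ∫ t, φ (t + u) * g t) θ s = ∫ t, movingAverage φ θ (t + s) * g t := by
  have hle : s ≤ s + θ := by linarith
  have hprod : Integrable (Function.uncurry fun u t => φ (t + u) * g t)
      ((volume.restrict (Ioc s (s + θ))).prod volume) := by
    refine Integrable.mono' ((integrable_const C).mul_prod hg.norm)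
      ((hφ.comp (measurable_snd.add measurable_fst)).aestronglyMeasurable.mul hg.1.comp_snd)
      (ae_of_all _ fun p => ?_)
    simp only [Function.uncurry, norm_mul]
    exact mul_le_mul_of_nonneg_right (hC _) (norm_nonneg _)
  rw [movingAverage, intervalIntegral.integral_of_le hle, integral_integral_swap hprod,
    ← integral_const_mul]
  congr 1 with t
  rw [integral_mul_const, ← intervalIntegral.integral_of_le hle,
    intervalIntegral.integral_comp_add_left, movingAverage]
  ring_nf

theorem AlmostConvergentTo.exists_eventually_norm_movingAverage_sub_le
    (hAC : AlmostConvergentTo φ α) (hC : ∀ x, ‖φ x‖ ≤ C) {ε : ℝ} (hε : 0 < ε) :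
    ∃ θ > 0, ∀ᶠ y in atTop, ‖movingAverage φ θ y - α‖ ≤ ε := by
  rw [almostConvergentTo_iff] at hAC
  obtain ⟨θ, hsup, hinf, hθ⟩ := ((hAC.1.eventually_lt_const (lt_add_of_pos_right α hε)).and
    ((hAC.2.eventually_const_lt (sub_lt_self α hε)).and (eventually_gt_atTop 0))).exists
  have hbdd (y : ℝ) : |movingAverage φ θ y| ≤ C := norm_movingAverage_le hC θ y
  refine ⟨θ, hθ, ?_⟩
  filter_upwards [eventually_lt_of_limsup_lt hsup
      (isBoundedUnder_of ⟨C, fun y => (abs_le.1 (hbdd y)).2⟩),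
    eventually_lt_of_lt_liminf hinf (isBoundedUnder_of ⟨-C, fun y => (abs_le.1 (hbdd y)).1⟩)]
    with y hy₁ hy₂
  rw [Real.norm_eq_abs, abs_le]
  constructor <;> linarith

theorem AlmostConvergentTo.exists_eventually_norm_integral_movingAverage_sub_lt
    (hAC : AlmostConvergentTo φ α) (hφ : Measurable φ) (hC : ∀ x, ‖φ x‖ ≤ C)
    (hg : Integrable g) {ε : ℝ} (hε : 0 < ε) :
    ∃ θ > 0, ∀ᶠ s in atTop, ‖(∫ t, movingAverage φ θ (t + s) * g t) - α * ∫ t, g t‖ < ε := by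
  set K := (∫ t, ‖g t‖) + 1
  have hK : 0 < K := by positivity
  obtain ⟨θ, hθ, hclose⟩ := hAC.exists_eventually_norm_movingAverage_sub_le hC
    (show 0 < ε / 2 / K by positivity)
  have hcont :=
    continuous_movingAverage (intervalIntegrable_of_norm_le hφ.aestronglyMeasurable hC) θ
  refine ⟨θ, hθ, ?_⟩
  filter_upwards [eventually_norm_integral_comp_add_right_mul_lt
    (h := fun y => movingAverage φ θ y - α)
    (fun y => (norm_sub_le _ _).trans (add_le_add (norm_movingAverage_le hC θ y) le_rfl))
    hclose hg (half_pos hε)] with s hs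
  have hint : Integrable fun t => movingAverage φ θ (t + s) * g t :=
    hg.bdd_mul (hcont.comp (continuous_add_const s)).aestronglyMeasurable
      (ae_of_all _ fun t => norm_movingAverage_le hC θ (t + s))
  rw [← integral_const_mul, ← integral_sub hint (hg.const_mul α)]
  simp only [← sub_mul]
  calc _ < ε / 2 / K * (∫ t, ‖g t‖) + ε / 2 := hs
    _ ≤ ε := by
      have : ε / 2 / K * (∫ t, ‖g t‖) ≤ ε / 2 := by
        rw [div_mul_eq_mul_div, div_le_iff₀ hK]
        nlinarith
      linarith

theorem AlmostConvergentTo.translatesWeakStarTendsto (hAC : AlmostConvergentTo φ α)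
    (hφ : Measurable φ) (hC : ∀ x, ‖φ x‖ ≤ C) (hosc : WeakStarSlowlyOscillating φ) :
    TranslatesWeakStarTendsto φ α := by
  intro g hg
  have hFosc (s : ℝ) : Tendsto (fun x => (∫ t, φ (t + (x + s)) * g t) - ∫ t, φ (t + x) * g t)
      atTop (𝓝 0) :=
    (hosc s g hg).congr (integral_sub_comp_add_mul hφ hC hg · s)
  rw [Metric.tendsto_nhds]
  intro ε hε
  obtain ⟨θ, hθ, hclose⟩ :=
    hAC.exists_eventually_norm_integral_movingAverage_sub_lt hφ hC hg (half_pos hε)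
  have havg := Metric.tendsto_nhds.1 (tendsto_movingAverage_sub_self
    (aestronglyMeasurable_integral_comp_add_right_mul hφ hg.1)
    (norm_integral_comp_add_right_mul_le hC hg) hθ.ne' hFosc) _ (half_pos hε)
  filter_upwards [hclose, havg] with s hs₁ hs₂
  rw [movingAverage_integral_comp_add_right_mul hφ hC hg hθ.le, dist_zero_right] at hs₂
  have htri := norm_sub_le_norm_sub_add_norm_sub (∫ t, φ (t + s) * g t)
    (∫ t, movingAverage φ θ (t + s) * g t) (α * ∫ t, g t)
  rw [norm_sub_rev (∫ t, φ (t + s) * g t) (∫ t, movingAverage φ θ (t + s) * g t)] at htri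
  rw [dist_eq_norm]
  linarith

theorem TranslatesWeakStarTendsto.tendsto_movingAverage (H : TranslatesWeakStarTendsto φ α)
    {θ : ℝ} (hθ : 0 < θ) : Tendsto (movingAverage φ θ) atTop (𝓝 α) := by
  have hg : Integrable ((Ioc 0 θ).indicator fun _ => (1 : ℝ)) :=
    (integrable_indicator_iff measurableSet_Ioc).2 (integrableOn_const measure_Ioc_lt_top.ne)
  have hmass : ∫ x, (Ioc 0 θ).indicator (fun _ => (1 : ℝ)) x = θ := by
    simp [integral_indicator_const _ measurableSet_Ioc, hθ.le]
  have hwindow (s : ℝ) :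
      ∫ x, φ (x + s) * (Ioc 0 θ).indicator (fun _ => (1 : ℝ)) x = ∫ t in s..(s + θ), φ t := by
    have hmul : (fun x => φ (x + s) * (Ioc 0 θ).indicator (fun _ => (1 : ℝ)) x) =
        (Ioc 0 θ).indicator fun x => φ (x + s) := by
      ext x
      by_cases hx : x ∈ Ioc 0 θ <;> simp [hx]
    rw [hmul, integral_indicator measurableSet_Ioc, ← intervalIntegral.integral_of_le hθ.le,
      intervalIntegral.integral_comp_add_right, zero_add, add_comm]
  have := (H _ hg).const_mul (1 / θ)
  rw [hmass, mul_comm α, ← mul_assoc, one_div_mul_cancel hθ.ne', one_mul] at this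
  simp only [hwindow] at this
  exact this

theorem TranslatesWeakStarTendsto.almostConvergentTo (H : TranslatesWeakStarTendsto φ α) :
    AlmostConvergentTo φ α := by
  have hmean : ∀ᶠ θ in atTop, Tendsto (movingAverage φ θ) atTop (𝓝 α) :=
    (eventually_gt_atTop 0).mono fun θ hθ => H.tendsto_movingAverage hθ
  exact ⟨tendsto_const_nhds.congr' (hmean.mono fun θ h => h.limsup_eq.symm),
    tendsto_const_nhds.congr' (hmean.mono fun θ h => h.liminf_eq.symm)⟩

theorem TranslatesWeakStarTendsto.weakStarSlowlyOscillating (H : TranslatesWeakStarTendsto φ α)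
    (hφ : Measurable φ) (hC : ∀ x, ‖φ x‖ ≤ C) : WeakStarSlowlyOscillating φ := by
  intro s g hg
  have hshift := (H g hg).comp (tendsto_atTop_add_const_right atTop s tendsto_id)
  simpa only [integral_sub_comp_add_mul hφ hC hg, Function.comp_def, id, sub_self] using
    hshift.sub (H g hg)

theorem translatesWeakStarTendsto_iff_of_norm_le (hφ : Measurable φ) (hC : ∀ x, ‖φ x‖ ≤ C) :
    TranslatesWeakStarTendsto φ α ↔ AlmostConvergentTo φ α ∧ WeakStarSlowlyOscillating φ :=
  ⟨fun H => ⟨H.almostConvergentTo, H.weakStarSlowlyOscillating hφ hC⟩,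
    fun ⟨hAC, hosc⟩ => hAC.translatesWeakStarTendsto hφ hC hosc⟩

end

theorem weakstar_iff_almostConvergent_and_tauberian_general (φ : ℝ → ℝ)
    (hbdd : MemLp φ ⊤ (volume : Measure ℝ)) (α : ℝ) :
    (∀ g : ℝ → ℝ, Integrable g →
        Tendsto (fun s : ℝ => ∫ x : ℝ, φ (x + s) * g x) atTop
          (nhds (α * ∫ x : ℝ, g x)))
    ↔ (AlmostConvergentTo φ α ∧
        ∀ s : ℝ, ∀ g : ℝ → ℝ, Integrable g →
          Tendsto (fun x : ℝ => ∫ t : ℝ, (φ (x + s + t) - φ (x + t)) * g t) atTop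
            (nhds 0)) := by
  obtain ⟨ψ, C, hψ, hC, hφψ⟩ := hbdd.exists_measurable_norm_le_ae_eq
  change TranslatesWeakStarTendsto φ α ↔ AlmostConvergentTo φ α ∧ WeakStarSlowlyOscillating φ
  rw [translatesWeakStarTendsto_congr_ae hφψ, almostConvergentTo_congr_ae hφψ,
    weakStarSlowlyOscillating_congr_ae hφψ]
  exact translatesWeakStarTendsto_iff_of_norm_le hψ hC

/-- Tauberian theorem: the translates of `φ` converge weak* to the constant `α` iff
`φ` is almost convergent to `α` and the differences of translates `φ_{x+s} - φ_x`
converge weak* to `0` as `x → ∞` for every `s`. -/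
theorem weakstar_iff_almostConvergent_and_tauberian (φ : ℝ → ℝ) (hmeas : Measurable φ)
    (hbdd : MemLp φ ⊤ (volume : Measure ℝ)) (α : ℝ) :
    (∀ g : ℝ → ℝ, Integrable g →
        Tendsto (fun s : ℝ => ∫ x : ℝ, φ (x + s) * g x) atTop
          (nhds (α * ∫ x : ℝ, g x)))
    ↔ (AlmostConvergentTo φ α ∧
        ∀ s : ℝ, ∀ g : ℝ → ℝ, Integrable g →
          Tendsto (fun x : ℝ => ∫ t : ℝ, (φ (x + s + t) - φ (x + t)) * g t) atTop
            (nhds 0)) :=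
  weakstar_iff_almostConvergent_and_tauberian_general φ hbdd α
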